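/- arXiv:math/0009032 — 6 statements merged into one kernel-verified Lean document; each statement's English description precedes it below -/
import Mathlib

section
/- Let R be a ring with unity such that the group of units U(R) contains an ω-subgroup. Then every nilpotent element of ∇(R) commutes with every element of ∇(R), where ∇(R) = {a ∈ R : the centralizer C_{U(R)}(a) has finite index in U(R)} is the FC-subring of R. -/
/-- The centralizer of a ring element `a` inside the unit group `Rˣ`. -/
def unitCentralizer {R : Type*} [Ring R] (a : R) : Subgroup Rˣ where
  carrier := {u : Rˣ | (u : R) * a = a * (u : R)}
  one_mem' := by simp
  mul_mem' := by
    intro u v hu hv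
    have hu' : Commute ((u : Rˣ) : R) a := hu
    have hv' : Commute ((v : Rˣ) : R) a := hv
    show ((u * v : Rˣ) : R) * a = a * ((u * v : Rˣ) : R)
    rw [Units.val_mul]
    exact hu'.mul_left hv'
  inv_mem' := by
    intro u hu
    have hu' : Commute ((u : Rˣ) : R) a := hu
    exact hu'.units_inv_left

@[simp] lemma mem_unitCentralizer {R : Type*} [Ring R] {a : R} {u : Rˣ} :
    u ∈ unitCentralizer a ↔ (u : R) * a = a * (u : R) := Iff.rfl

/-- The FC-subring `∇(R)` of a ring `R`: the set of elements whose centralizer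
in the unit group has finite index. -/
def FCSubring (R : Type*) [Ring R] : Set R :=
  {a : R | (unitCentralizer a).FiniteIndex}

/-- An infinite subgroup `H ≤ Rˣ` is an ω-subgroup if for every nonzero Lie
commutator `x*y - y*x` only finitely many elements of the form `1 - h`, `h ∈ H`,
annihilate it on the left. -/
def IsOmegaSubgroup {R : Type*} [Ring R] (H : Subgroup Rˣ) : Prop :=
  (H : Set Rˣ).Infinite ∧
    ∀ x y : R, x * y - y * x ≠ 0 →
      {h : Rˣ | h ∈ H ∧ (1 - (h : R)) * (x * y - y * x) = 0}.Finite

/-- The FC-radical `ΔU(R)` of the unit group: the subgroup of units having only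
finitely many conjugates, i.e. whose centralizer has finite index. -/
def FCRadical (R : Type*) [Ring R] : Subgroup Rˣ where
  carrier := {u : Rˣ | (unitCentralizer (u : R)).FiniteIndex}
  one_mem' := by
    have h : unitCentralizer ((1 : Rˣ) : R) = ⊤ := by
      ext u; simp
    show (unitCentralizer ((1 : Rˣ) : R)).FiniteIndex
    rw [h]
    infer_instance
  mul_mem' := by
    intro u v hu hv
    have hle : unitCentralizer (u : R) ⊓ unitCentralizer (v : R) ≤
        unitCentralizer ((u * v : Rˣ) : R) := by
      intro w hw
      have hwu : (w : R) * (u : R) = (u : R) * (w : R) := hw.1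
      have hwv : (w : R) * (v : R) = (v : R) * (w : R) := hw.2
      show (w : R) * ((u * v : Rˣ) : R) = ((u * v : Rˣ) : R) * (w : R)
      rw [Units.val_mul, ← mul_assoc, hwu, mul_assoc, hwv, ← mul_assoc]
    haveI : (unitCentralizer (u : R)).FiniteIndex := hu
    haveI : (unitCentralizer (v : R)).FiniteIndex := hv
    exact Subgroup.finiteIndex_of_le hle
  inv_mem' := by
    intro u hu
    have h : unitCentralizer ((u⁻¹ : Rˣ) : R) = unitCentralizer (u : R) := by
      ext w
      constructor
      · intro hw
        have hw' : Commute ((w : Rˣ) : R) ((u⁻¹ : Rˣ) : R) := hw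
        have h2 : Commute ((w : Rˣ) : R) ((u⁻¹⁻¹ : Rˣ) : R) := hw'.units_inv_right
        rw [inv_inv] at h2
        exact h2
      · intro hw
        have hw' : Commute ((w : Rˣ) : R) ((u : Rˣ) : R) := hw
        exact hw'.units_inv_right
    show (unitCentralizer ((u⁻¹ : Rˣ) : R)).FiniteIndex
    rw [h]
    exact hu

@[simp] lemma mem_FCRadical {R : Type*} [Ring R] {u : Rˣ} :
    u ∈ FCRadical R ↔ (unitCentralizer (u : R)).FiniteIndex := Iff.rfl

/-!
For `g` in the infinite group `L = H ∩ C(x) ∩ C(v)` the element `g + x` is a unit, since `x` is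
nilpotent and commutes with `g`. As `C(v)` has finite index, infinitely many `g ∈ L` give units
`g + x` in one right coset `C(v) (g₀ + x)`. Writing `q = g₀ + x`, the unit `(g + x) q⁻¹` equals
`1 + (g - g₀) q⁻¹` and commutes with `v`, while `g - g₀` commutes with `v`; hence
`(1 - g₀⁻¹ g) [q⁻¹, v] = 0` for infinitely many `g₀⁻¹ g ∈ H`. If `[x, v] ≠ 0` then
`[q⁻¹, v] ≠ 0`, contradicting the ω-property of `H`.
-/

namespace Subgroup

variable {G : Type*} [Group G]

theorem infinite_inf_of_finiteIndex {H : Subgroup G} (K : Subgroup G) [K.FiniteIndex]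
    (hH : (H : Set G).Infinite) : ((H ⊓ K : Subgroup G) : Set G).Infinite := by
  have : Infinite H := hH.to_subtype
  have hKH : Infinite (K.subgroupOf H) := not_finite_iff_infinite.mp fun _ => by
    have : Finite H := (finite_iff_finite_and_finiteIndex (K.subgroupOf H)).mpr ⟨‹_›, inferInstance⟩
    exact not_finite H
  rw [inf_comm, ← subgroupOf_map_subtype, coe_map]
  exact (Set.infinite_coe_iff.mp hKH).image H.subtype_injective.injOn

theorem exists_infinite_setOf_mul_inv_mem {α : Type*} [Infinite α] (K : Subgroup G)
    [K.FiniteIndex] (f : α → G) : ∃ a, {b | f b * (f a)⁻¹ ∈ K}.Infinite := by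
  obtain ⟨c, hc⟩ := Finite.exists_infinite_fiber fun b => (QuotientGroup.mk (f b)⁻¹ : G ⧸ K)
  obtain ⟨⟨a, ha⟩⟩ := (Set.infinite_coe_iff.mp hc).nonempty.to_subtype
  refine ⟨a, (Set.infinite_coe_iff.mp hc).mono fun b hb => ?_⟩
  have := QuotientGroup.eq.mp ((Set.mem_preimage.mp hb).trans (Set.mem_preimage.mp ha).symm)
  simpa using this

end Subgroup

theorem Units.sub_mul_commutator_inv_eq_zero {R : Type*} [Ring R] {p q : Rˣ} {v : R}
    (hpq : Commute ((p : R) - q) v) (hv : Commute ((p * q⁻¹ : Rˣ) : R) v) :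
    ((p : R) - q) * (↑q⁻¹ * v - v * ↑q⁻¹) = 0 := by
  have hval : ((p * q⁻¹ : Rˣ) : R) = 1 + ((p : R) - q) * ↑q⁻¹ := by simp [sub_mul]
  have hcomm : Commute (((p : R) - q) * ↑q⁻¹) v := by
    simpa [hval] using hv.sub_left (Commute.one_left v)
  calc ((p : R) - q) * (↑q⁻¹ * v - v * ↑q⁻¹)
      = ((p : R) - q) * ↑q⁻¹ * v - (((p : R) - q) * v) * ↑q⁻¹ := by noncomm_ring
    _ = v * (((p : R) - q) * ↑q⁻¹) - (v * ((p : R) - q)) * ↑q⁻¹ := by rw [hcomm.eq, hpq.eq]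
    _ = 0 := by noncomm_ring

theorem one_sub_inv_mul_mul_commutator_eq_zero {R : Type*} [Ring R] {x v : R} {g₀ g p q : Rˣ}
    (hg₀ : Commute (g₀ : R) v) (hg : Commute (g : R) v) (hp : (p : R) = g + x)
    (hq : (q : R) = g₀ + x) (hpq : Commute ((p * q⁻¹ : Rˣ) : R) v) :
    (1 - ((g₀⁻¹ * g : Rˣ) : R)) * (↑q⁻¹ * v - v * ↑q⁻¹) = 0 := by
  have hsub : (p : R) - q = -(g₀ * (1 - ((g₀⁻¹ * g : Rˣ) : R))) := by
    rw [hp, hq, mul_sub, Units.val_mul, ← mul_assoc, Units.mul_inv, one_mul, mul_one]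
    abel
  have hsub_comm : Commute ((p : R) - q) v := by
    rw [hp, hq]
    simpa using hg.sub_left hg₀
  have key := Units.sub_mul_commutator_inv_eq_zero hsub_comm hpq
  rwa [hsub, neg_mul, neg_eq_zero, mul_assoc, Units.mul_right_eq_zero] at key

theorem commute_of_commute_units_inv {R : Type*} [Ring R] {g x v : R} {q : Rˣ}
    (hq : (q : R) = g + x) (hg : Commute g v) (h : Commute (↑q⁻¹ : R) v) : Commute x v := by
  have hqv : Commute (g + x) v := hq ▸ Commute.units_inv_left_iff.mp h
  simpa using hqv.sub_left hg

/-- If `U(R)` contains an ω-subgroup, then every nilpotent element of the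
FC-subring `∇(R)` commutes with every element of `∇(R)`. -/
theorem nilpotent_central_in_fcSubring (R : Type*) [Ring R]
    (H : Subgroup Rˣ) (hH : IsOmegaSubgroup H) :
    ∀ x ∈ FCSubring R, IsNilpotent x → ∀ v ∈ FCSubring R, x * v = v * x := by
  intro x hx hnil v hv
  by_contra hxv
  have : (unitCentralizer x).FiniteIndex := hx
  have : (unitCentralizer v).FiniteIndex := hv
  let L := H ⊓ (unitCentralizer x ⊓ unitCentralizer v)
  have : Infinite L := (Subgroup.infinite_inf_of_finiteIndex _ hH.1).to_subtype
  let u : L → Rˣ := fun g =>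
    (hnil.isUnit_add_left_of_commute g.1.isUnit (Commute.symm g.2.2.1)).unit
  obtain ⟨g₀, hS⟩ := Subgroup.exists_infinite_setOf_mul_inv_mem (unitCentralizer v) u
  have hc : ↑(u g₀)⁻¹ * v - v * ↑(u g₀)⁻¹ ≠ 0 := fun h =>
    hxv (commute_of_commute_units_inv rfl g₀.2.2.2 (sub_eq_zero.mp h)).eq
  refine (hH.2 _ _ hc).not_infinite
    (Set.infinite_of_injOn_mapsTo (f := fun g : L => (g₀ : Rˣ)⁻¹ * g) ?_ ?_ hS)
  · exact fun a _ b _ hab => Subtype.ext (mul_left_cancel hab)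
  · intro g hg
    exact ⟨H.mul_mem (H.inv_mem g₀.2.1) g.2.1,
      one_sub_inv_mul_mul_commutator_eq_zero g₀.2.2.2 g.2.2.2 rfl rfl hg⟩
end

section
/- Let R be an algebra over a field F such that the group of units U(R) contains an ω-subgroup, and let ΔU = {u ∈ U(R) : [U(R) : C_{U(R)}(u)] < ∞} be the FC-radical of U(R). If u, v ∈ ΔU are of finite order, then the commutator c = u⁻¹v⁻¹uv is unipotent (i.e., c - 1 is nilpotent in R) and c commutes with every element of ΔU. -/
/-!
Centrality comes first. If `x` and `c` have finitely many conjugates and `c` is unipotent,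
infinitely many `k ∈ H` commute with both, and the units `k + (c - 1)` conjugate `x` into a finite
set. Infinitely many of them give the same conjugate, and this produces infinitely many `h ∈ H`
with `(1 - h) β = 0` for a Lie commutator `β` that vanishes only if `x` and `c` commute. The same
argument with the units `1 + k (1 - e) r e` shows that an idempotent `e` with finitely many
conjugates is central.

For unipotence over an infinite field, the units `λ - v` (with `λ` outside the finite spectrum of
`v`) play the role of `k + (c - 1)` and force `u` and `v` to commute. Over a finite field,
Dietzmann's lemma makes the normal closure of `{u, v}` finite; its span is a finite subalgebra
stable under conjugation, so its idempotents are central. In a finite ring with central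
idempotents, splitting along an idempotent reduces to a ring in which every element is nilpotent
or a unit; modulo the nilpotents it is a finite division ring, hence commutative by Wedderburn,
so commutators of units are unipotent.
-/

open scoped commutatorElement

section Groups

variable {G : Type*} [Group G]

theorem Subgroup.infinite_inf_of_finiteIndex_s6 {H : Subgroup G}
    (hH : (H : Set G).Infinite) (L : Subgroup G) [L.FiniteIndex] :
    ((H ⊓ L : Subgroup G) : Set G).Infinite := by
  have : Infinite H := hH.to_subtype
  obtain ⟨q, hq⟩ := Finite.exists_infinite_fiber fun h : H => ((h : G) : G ⧸ L)
  obtain ⟨⟨h₀, hh₀⟩, hq₀⟩ := (Set.infinite_coe_iff.mp hq).nonempty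
  refine Set.infinite_of_injective_forall_mem (α := (fun h : H => ((h : G) : G ⧸ L)) ⁻¹' {q})
    (f := fun h => h₀⁻¹ * h) (fun h h' e => Subtype.ext (Subtype.ext (mul_left_cancel e)))
    fun ⟨⟨h, hh⟩, hq'⟩ => ⟨H.mul_mem (H.inv_mem hh₀) hh, QuotientGroup.eq.mp ?_⟩
  exact hq₀.trans hq'.symm

theorem exists_prod_eq_pow_count_mul_prod [DecidableEq G] {X : Set G}
    (hX : ∀ g ∈ X, ∀ w : G, w * g * w⁻¹ ∈ X) (x : G) (l : List G) (hl : ∀ g ∈ l, g ∈ X) :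
    ∃ l' : List G, (∀ g ∈ l', g ∈ X) ∧ l'.length + l.count x = l.length ∧
      l.prod = x ^ l.count x * l'.prod := by
  induction l with
  | nil => exact ⟨[], by simp, by simp, by simp⟩
  | cons a t ih =>
    obtain ⟨l', hl', hlen, hprod⟩ := ih fun g hg => hl g (List.mem_cons_of_mem a hg)
    by_cases hax : a = x
    · subst hax
      refine ⟨l', hl', ?_, ?_⟩
      · rw [List.count_cons_self, List.length_cons]
        omega
      · rw [List.prod_cons, List.count_cons_self, hprod, pow_succ', mul_assoc]
    · refine ⟨(x ^ t.count x)⁻¹ * a * x ^ t.count x :: l', ?_, ?_, ?_⟩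
      · simp only [List.mem_cons, forall_eq_or_imp]
        exact ⟨by simpa using hX a (hl a List.mem_cons_self) (x ^ t.count x)⁻¹, hl'⟩
      · rw [List.count_cons_of_ne hax, List.length_cons, List.length_cons]
        omega
      · rw [List.prod_cons, List.prod_cons, hprod, List.count_cons_of_ne hax]
        group

theorem exists_prod_eq_of_length_le_sum_orderOf {X : Set G} (hXfin : X.Finite)
    (hX : ∀ g ∈ X, ∀ w : G, w * g * w⁻¹ ∈ X) (htor : ∀ g ∈ X, IsOfFinOrder g) (l : List G)
    (hl : ∀ g ∈ l, g ∈ X) : ∃ l' : List G, (∀ g ∈ l', g ∈ X) ∧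
      l'.length ≤ ∑ x ∈ hXfin.toFinset, orderOf x ∧ l'.prod = l.prod := by
  classical
  induction hn : l.length using Nat.strong_induction_on generalizing l with
  | _ n ih =>
  by_cases hshort : l.length ≤ ∑ x ∈ hXfin.toFinset, orderOf x
  · exact ⟨l, hl, hshort, rfl⟩
  obtain ⟨x, hxl, hx⟩ : ∃ x ∈ l.toFinset, orderOf x ≤ l.count x := by
    by_contra! hcount
    refine hshort ?_
    calc l.length = ∑ x ∈ l.toFinset, l.count x := by simp
      _ ≤ ∑ x ∈ l.toFinset, orderOf x := Finset.sum_le_sum fun x hx => (hcount x hx).le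
      _ ≤ ∑ x ∈ hXfin.toFinset, orderOf x := Finset.sum_le_sum_of_subset fun x hx =>
          hXfin.mem_toFinset.mpr (hl x (List.mem_toFinset.mp hx))
  have hxX := hl x (List.mem_toFinset.mp hxl)
  have hx0 := (htor x hxX).orderOf_pos
  obtain ⟨l', hl', hlen, hprod⟩ := exists_prod_eq_pow_count_mul_prod hX x l hl
  obtain ⟨l'', hl'', hlen'', hprod''⟩ :=
    ih _ (by rw [← hn, ← hlen, List.length_append, List.length_replicate]; omega)
      (List.replicate (l.count x - orderOf x) x ++ l')
      (by simpa [or_imp, forall_and] using ⟨fun _ => hxX, hl'⟩) rfl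
  refine ⟨l'', hl'', hlen'', ?_⟩
  rw [hprod'', hprod, List.prod_append, List.prod_replicate, ← pow_sub_mul_pow _ hx,
    pow_orderOf_eq_one, mul_one]

theorem Subgroup.finite_closure_of_conj_mem {X : Set G} (hXfin : X.Finite)
    (hX : ∀ g ∈ X, ∀ w : G, w * g * w⁻¹ ∈ X) (htor : ∀ g ∈ X, IsOfFinOrder g) :
    (closure X : Set G).Finite := by
  have : Finite X := hXfin.to_subtype
  refine ((List.finite_length_le X (∑ x ∈ hXfin.toFinset, orderOf x)).image
    fun l => (l.map Subtype.val).prod).subset fun g hg => ?_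
  rw [SetLike.mem_coe, ← mem_toSubmonoid, closure_toSubmonoid_of_isOfFinOrder htor] at hg
  obtain ⟨l, hl, rfl⟩ := Submonoid.exists_list_of_mem_closure hg
  obtain ⟨l', hl', hlen, hprod⟩ := exists_prod_eq_of_length_le_sum_orderOf hXfin hX htor l hl
  exact ⟨l'.attach.map fun g => (⟨g.1, hl' g.1 g.2⟩ : X), by simpa using hlen, by simpa using hprod⟩

/-- Dietzmann's lemma. -/
theorem Subgroup.finite_normalClosure {s : Set G} (hs : s.Finite)
    (hconj : ∀ g ∈ s, (conjugatesOf g).Finite) (htor : ∀ g ∈ s, IsOfFinOrder g) :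
    (normalClosure s : Set G).Finite :=
  finite_closure_of_conj_mem (hs.biUnion hconj) (fun _ hg _ => Group.conj_mem_conjugatesOfSet hg)
    fun g hg => by
      obtain ⟨a, ha, hag⟩ := Group.mem_conjugatesOfSet_iff.mp hg
      exact hag.isOfFinOrder (htor a ha)

end Groups

section FiniteRings

theorem exists_pow_isIdempotentElem {M : Type*} [Monoid M] [Finite M] (a : M) :
    ∃ n, 0 < n ∧ IsIdempotentElem (a ^ n) := by
  obtain ⟨i, j, hij, h⟩ := Finite.exists_ne_map_eq_of_infinite fun n : ℕ => a ^ n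
  wlog hlt : i < j generalizing i j
  · exact this j i hij.symm h.symm (lt_of_le_of_ne (not_lt.mp hlt) hij.symm)
  have hstep : ∀ m, i ≤ m → a ^ (m + (j - i)) = a ^ m := fun m hm => by
    rw [show m + (j - i) = m - i + j by omega, pow_add, ← h, ← pow_add, Nat.sub_add_cancel hm]
  have hper : ∀ k m, i ≤ m → a ^ (m + k * (j - i)) = a ^ m := fun k => by
    induction k with
    | zero => simp
    | succ k ih => intro m hm; rw [add_mul, one_mul, ← add_assoc, hstep _ (by omega), ih m hm]
  have hle : i ≤ (i + 1) * (j - i) := (Nat.le_mul_of_pos_right _ (by omega)).trans' i.le_succ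
  refine ⟨(i + 1) * (j - i), Nat.mul_pos i.succ_pos (by omega), ?_⟩
  rw [IsIdempotentElem, ← pow_add, hper _ _ hle]

theorem Pi.isNilpotent_of_forall {ι : Type*} [Finite ι] {R : ι → Type*}
    [∀ i, MonoidWithZero (R i)] {x : ∀ i, R i} (h : ∀ i, IsNilpotent (x i)) : IsNilpotent x := by
  cases nonempty_fintype ι
  choose n hn using h
  refine ⟨∑ i, n i, funext fun i => ?_⟩
  rw [Pi.pow_apply, pow_eq_zero_of_le (Finset.single_le_sum (fun _ _ => Nat.zero_le _)
    (Finset.mem_univ i)) (hn i), Pi.zero_apply]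

theorem isNilpotent_or_isUnit_of_forall_isIdempotentElem {M₀ : Type*} [MonoidWithZero M₀]
    [Finite M₀] (h : ∀ e : M₀, IsIdempotentElem e → e = 0 ∨ e = 1) (a : M₀) :
    IsNilpotent a ∨ IsUnit a := by
  obtain ⟨n, hn, he⟩ := exists_pow_isIdempotentElem a
  rcases h _ he with h0 | h1
  · exact .inl ⟨n, h0⟩
  · exact .inr (.of_mul_eq_one (a ^ (n - 1)) (by rw [← pow_succ', Nat.sub_add_cancel hn, h1]))

theorem IsIdempotentElem.natCard_corner_lt {M : Type*} [Monoid M] [Finite M] {e : M}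
    (he : IsIdempotentElem e) (he1 : e ≠ 1) : Nat.card he.Corner < Nat.card M :=
  Finite.card_subtype_lt (x := 1) fun h =>
    he1 (by simpa using ((Subsemigroup.mem_corner_iff he).mp h).1)

theorem IsIdempotentElem.corner_isIdempotentElem_mem_center {B : Type*} [Semiring B]
    (hB : ∀ e : B, IsIdempotentElem e → e ∈ Set.center B) {e : B} (he : IsIdempotentElem e)
    (z : he.Corner) (hz : IsIdempotentElem z) : z ∈ Set.center he.Corner :=
  Semigroup.mem_center_iff.mpr fun g =>
    Subtype.ext (Semigroup.mem_center_iff.mp (hB _ (congrArg Subtype.val hz)) g.1)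

variable {B : Type*} [Ring B] [Finite B]

def nilpotentIdeal [Nontrivial B] (hB : ∀ e : B, IsIdempotentElem e → e = 0 ∨ e = 1) :
    TwoSidedIdeal B :=
  -- every element is nilpotent or a unit, and in a finite ring a one-sided unit is a unit
  have hdich := isNilpotent_or_isUnit_of_forall_isIdempotentElem hB
  have mul_left {r a : B} (ha : IsNilpotent a) : IsNilpotent (r * a) :=
    (hdich _).resolve_right fun hu => (isUnit_of_mul_isUnit_right hu).not_isNilpotent ha
  .mk' {a | IsNilpotent a} .zero
    (fun {a b} ha hb => (hdich (a + b)).resolve_right fun hu => by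
      have hsum : ↑hu.unit⁻¹ * a + ↑hu.unit⁻¹ * b = 1 := by rw [← mul_add, hu.val_inv_mul]
      have := (mul_left (r := ↑hu.unit⁻¹) ha).isUnit_one_sub
      rw [← hsum, add_sub_cancel_left] at this
      exact this.not_isNilpotent (mul_left hb))
    (·.neg) mul_left
    (fun {a r} ha => (hdich _).resolve_right fun hu =>
      (isUnit_of_mul_isUnit_left hu).not_isNilpotent ha)

theorem mem_nilpotentIdeal [Nontrivial B] (hB : ∀ e : B, IsIdempotentElem e → e = 0 ∨ e = 1)
    {a : B} : a ∈ nilpotentIdeal hB ↔ IsNilpotent a := by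
  unfold nilpotentIdeal
  exact TwoSidedIdeal.mem_mk' ..

theorem isNilpotent_commutatorElement_sub_one_of_forall_isIdempotentElem
    (hB : ∀ e : B, IsIdempotentElem e → e = 0 ∨ e = 1) (g k : Bˣ) :
    IsNilpotent (((⁅g, k⁆ : Bˣ) : B) - 1) := by
  nontriviality B
  let I := nilpotentIdeal hB
  set π := I.ringCon.mk'
  have hπ : ∀ a, π a = 0 ↔ IsNilpotent a := fun a => by
    rw [← mem_nilpotentIdeal hB, TwoSidedIdeal.mem_iff, ← RingCon.eq]
    rfl
  have : Finite I.ringCon.Quotient := .of_surjective π (RingCon.mk'_surjective _)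
  have : Nontrivial I.ringCon.Quotient :=
    nontrivial_of_ne (π 1) 0 fun h => isUnit_one.not_isNilpotent ((hπ 1).mp h)
  have : NoZeroDivisors I.ringCon.Quotient := by
    refine ⟨fun {a b} hab => ?_⟩
    obtain ⟨a, rfl⟩ := RingCon.mk'_surjective _ a
    obtain ⟨b, rfl⟩ := RingCon.mk'_surjective _ b
    rw [← map_mul, hπ] at hab
    rw [hπ, hπ]
    by_contra! h
    exact ((isNilpotent_or_isUnit_of_forall_isIdempotentElem hB a).resolve_left h.1).mul
      ((isNilpotent_or_isUnit_of_forall_isIdempotentElem hB b).resolve_left h.2)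
      |>.not_isNilpotent hab
  have : IsDomain I.ringCon.Quotient := NoZeroDivisors.to_isDomain _
  have hcomm := (Finite.isDomain_to_isField I.ringCon.Quotient).mul_comm
  have : Units.map π.toMonoidHom ⁅g, k⁆ = 1 := by
    rw [map_commutatorElement, commutatorElement_eq_one_iff_commute]
    exact Units.ext (hcomm _ _)
  have hc := congrArg Units.val this
  rw [Units.coe_map, Units.val_one] at hc
  exact (hπ _).mp (by rw [map_sub, map_one]; exact sub_eq_zero.mpr hc)

theorem isNilpotent_commutatorElement_sub_one_of_finite
    (hB : ∀ e : B, IsIdempotentElem e → e ∈ Set.center B) (g k : Bˣ) :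
    IsNilpotent (((⁅g, k⁆ : Bˣ) : B) - 1) := by
  induction hn : Nat.card B using Nat.strong_induction_on generalizing B with
  | _ n ih =>
  by_cases htriv : ∀ e : B, IsIdempotentElem e → e = 0 ∨ e = 1
  · exact isNilpotent_commutatorElement_sub_one_of_forall_isIdempotentElem htriv g k
  obtain ⟨e, he, hne⟩ := not_forall₂.mp htriv
  obtain ⟨he0, he1⟩ := not_or.mp hne
  have hcoi := CompleteOrthogonalIdempotents.of_isIdempotentElem he
  let φ := hcoi.ringEquivOfIsMulCentral fun i => hB _ (hcoi.idem i)
  have hcorner : ∀ i, IsNilpotent (φ (((⁅g, k⁆ : Bˣ) : B) - 1) i) := fun i => by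
    let ψ : B →+* (hcoi.idem i).Corner := (Pi.evalRingHom _ i).comp φ.toRingHom
    have : Finite (hcoi.idem i).Corner := Subtype.finite
    have hlt : Nat.card (hcoi.idem i).Corner < n := hn ▸ (hcoi.idem i).natCard_corner_lt (by
      fin_cases i
      · exact he1
      · simpa [sub_eq_self] using he0)
    have := ih _ hlt ((hcoi.idem i).corner_isIdempotentElem_mem_center hB) (Units.map ψ g)
      (Units.map ψ k) rfl
    rw [← map_commutatorElement, Units.coe_map] at this
    simpa [ψ] using this
  exact (IsNilpotent.map_iff φ.injective).mp (Pi.isNilpotent_of_forall hcorner)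

end FiniteRings

section FCElements

variable {R : Type*} [Ring R]

theorem index_unitCentralizer (a : R) :
    (unitCentralizer a).index = (Set.range fun w : Rˣ => (w * a * ↑w⁻¹ : R)).ncard := by
  have horbit : MulAction.orbit (ConjAct Rˣ) a = Set.range fun w : Rˣ => (w * a * ↑w⁻¹ : R) := by
    ext b
    simp [MulAction.mem_orbit_iff, ConjAct.units_smul_def, ConjAct.toConjAct.surjective.exists]
  have hstab : unitCentralizer a = (MulAction.stabilizer (ConjAct Rˣ) a).comap
      (ConjAct.toConjAct : Rˣ ≃* ConjAct Rˣ).toMonoidHom := by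
    ext w
    simp only [mem_unitCentralizer, Subgroup.mem_comap, MulEquiv.coe_toMonoidHom,
      MulAction.mem_stabilizer_iff, ConjAct.units_smul_def, ConjAct.ofConjAct_toConjAct]
    rw [Units.mul_inv_eq_iff_eq_mul]
  rw [← horbit, ← MulAction.index_stabilizer, hstab]
  exact Subgroup.index_comap_of_surjective _ ConjAct.toConjAct.surjective

theorem mem_FCSubring_iff_finite_conj {a : R} :
    a ∈ FCSubring R ↔ (Set.range fun w : Rˣ => (w * a * ↑w⁻¹ : R)).Finite := by
  rw [FCSubring, Set.mem_ofPred_eq, Subgroup.finiteIndex_iff, index_unitCentralizer]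
  exact ⟨Set.finite_of_ncard_ne_zero, fun h => (Set.ncard_pos h).mpr (Set.range_nonempty _) |>.ne'⟩

theorem unitCentralizer_one_sub (a : R) : unitCentralizer (1 - a) = unitCentralizer a := by
  ext w
  simp [mul_sub, sub_mul]

theorem finite_conjugatesOf_of_mem_FCRadical {u : Rˣ} (hu : u ∈ FCRadical R) :
    (conjugatesOf u).Finite := by
  refine ((mem_FCSubring_iff_finite_conj.mp hu).preimage Units.val_injective.injOn).subset ?_
  intro b hb
  obtain ⟨c, rfl⟩ := isConj_iff.mp hb
  exact ⟨c, by simp⟩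

theorem Units.inv_mul_mul_eq_of_commute {M : Type*} [Monoid M] {a : M} {p q : Mˣ}
    (h : Commute a ↑(p * q⁻¹)) : ↑p⁻¹ * a * p = ↑q⁻¹ * a * q := by
  calc (↑p⁻¹ * a * p : M) = ↑p⁻¹ * (a * ↑(p * q⁻¹)) * q := by simp [mul_assoc]
    _ = ↑p⁻¹ * (↑(p * q⁻¹) * a) * q := by rw [h.eq]
    _ = ↑q⁻¹ * a * q := by simp [mul_assoc]

theorem exists_infinite_setOf_commute {ι : Type*} [Infinite ι] {a : R} (ha : a ∈ FCSubring R)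
    (W : ι → Rˣ) : ∃ i₀, {i | Commute a ↑(W i * (W i₀)⁻¹)}.Infinite := by
  have : (unitCentralizer a).FiniteIndex := ha
  obtain ⟨q, hq⟩ := Finite.exists_infinite_fiber fun i => (((W i)⁻¹ : Rˣ) : Rˣ ⧸ unitCentralizer a)
  obtain ⟨i₀, hi₀⟩ := (Set.infinite_coe_iff.mp hq).nonempty
  refine ⟨i₀, (Set.infinite_coe_iff.mp hq).mono fun i hi => ?_⟩
  have hc := QuotientGroup.eq.mp ((Set.mem_singleton_iff.mp hi).trans hi₀.symm)
  rw [inv_inv] at hc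
  exact Commute.symm hc

theorem IsOfFinOrder.finite_spectrum (F : Type*) [Field F] [Algebra F R] {y : R}
    (hy : IsOfFinOrder y) : (spectrum F y).Finite := by
  obtain ⟨m, hm, hym⟩ := hy.exists_pow_eq_one
  nontriviality R
  refine (Polynomial.nthRootsFinset m (1 : F)).finite_toSet.subset fun μ hμ => ?_
  have := spectrum.subset_polynomial_aeval y (Polynomial.X ^ m - 1) ⟨μ, hμ, rfl⟩
  simp only [map_sub, map_pow, Polynomial.aeval_X, map_one, hym, sub_self, spectrum.zero_eq,
    Polynomial.eval_sub, Polynomial.eval_pow, Polynomial.eval_X, Polynomial.eval_one,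
    Set.mem_singleton_iff, sub_eq_zero] at this
  rwa [Finset.mem_coe, Polynomial.mem_nthRootsFinset hm]

theorem commute_of_mem_FCSubring_of_finite_spectrum {F : Type*} [Field F] [Infinite F]
    [Algebra F R] {x y : R} (hx : x ∈ FCSubring R) (hy : (spectrum F y).Finite) :
    Commute x y := by
  have : Infinite (resolventSet F y) := by
    simpa only [spectrum, compl_compl] using hy.infinite_compl.to_subtype
  let W : resolventSet F y → Rˣ := fun μ => (spectrum.mem_resolventSet_iff.mp μ.2).unit
  have hW : ∀ μ, (W μ : R) = algebraMap F R μ - y := fun μ => IsUnit.unit_spec _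
  obtain ⟨μ₀, hT⟩ := exists_infinite_setOf_commute hx W
  obtain ⟨μ, hμ, hne⟩ := (hT.sdiff (Set.finite_singleton μ₀)).nonempty
  have hμμ₀ : (μ : F) - μ₀ ≠ 0 := sub_ne_zero.mpr fun h => hne (Subtype.ext h)
  have h1 : Commute x (algebraMap F R (μ - μ₀) * ↑(W μ₀)⁻¹) := by
    have hWμ : (W μ : R) = W μ₀ + algebraMap F R (μ - μ₀) := by
      rw [hW, hW, map_sub]
      abel
    have : (↑(W μ * (W μ₀)⁻¹) : R) = 1 + algebraMap F R (μ - μ₀) * ↑(W μ₀)⁻¹ := by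
      rw [Units.val_mul, hWμ, add_mul, Units.mul_inv]
    simpa [this] using (show Commute x _ from hμ).sub_right (Commute.one_right x)
  have h2 : Commute x ↑(W μ₀)⁻¹ := by
    have := (Algebra.commute_algebraMap_right (μ - μ₀ : F)⁻¹ x).mul_right h1
    rwa [← mul_assoc, ← map_mul, inv_mul_cancel₀ hμμ₀, map_one, one_mul] at this
  have h3 : Commute x (W μ₀) := by simpa using h2.units_inv_right
  simpa [hW] using (Algebra.commute_algebraMap_right (μ₀ : F) x).sub_right h3

end FCElements

section AdjoinUnits

variable {R : Type*} [Ring R] (F : Type*) [Field F] [Algebra F R]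

theorem finite_adjoin_units_of_finite [Finite F] {E : Subgroup Rˣ} (hE : (E : Set Rˣ).Finite) :
    ((Algebra.adjoin F (Units.val '' (E : Set Rˣ)) : Subalgebra F R) : Set R).Finite := by
  have hclosure : (Submonoid.closure (Units.val '' (E : Set Rˣ)) : Set R) = Units.val '' E :=
    congrArg SetLike.coe (Submonoid.closure_eq (E.toSubmonoid.map (Units.coeHom R)))
  have := Module.Finite.span_of_finite F (hE.image Units.val)
  have : Finite (Subalgebra.toSubmodule (Algebra.adjoin F (Units.val '' (E : Set Rˣ)))) := by
    rw [Algebra.adjoin_eq_span, hclosure]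
    exact Module.finite_of_finite F
  exact Set.finite_coe_iff.mp this

theorem conj_mem_adjoin_units {E : Subgroup Rˣ} [E.Normal] (w : Rˣ) {a : R}
    (ha : a ∈ Algebra.adjoin F (Units.val '' (E : Set Rˣ))) :
    ↑w * a * ↑w⁻¹ ∈ Algebra.adjoin F (Units.val '' (E : Set Rˣ)) := by
  induction ha using Algebra.adjoin_induction with
  | mem x hx =>
    obtain ⟨g, hg, rfl⟩ := hx
    exact Algebra.subset_adjoin ⟨w * g * w⁻¹, Subgroup.Normal.conj_mem ‹_› g hg w, by simp⟩
  | algebraMap r =>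
    rw [← Algebra.commutes, Units.mul_inv_cancel_right]
    exact Subalgebra.algebraMap_mem _ r
  | add x y _ _ hx hy => simpa [mul_add, add_mul] using add_mem hx hy
  | mul x y _ _ hx hy => simpa [mul_assoc] using mul_mem hx hy

end AdjoinUnits

namespace IsOmegaSubgroup

variable {R : Type*} [Ring R] {H : Subgroup Rˣ}

theorem commutator_eq_zero_of_forall_mul_eq (hH : IsOmegaSubgroup H)
    {S : Set Rˣ} (hSH : S ⊆ H) (hS : S.Infinite) {a b γ : R}
    (hγ : ∀ k ∈ S, (k : R) * (a * b - b * a) = γ) : a * b - b * a = 0 := by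
  by_contra hne
  obtain ⟨k₀, hk₀⟩ := hS.nonempty
  refine hS (((hH.2 a b hne).preimage (mul_right_injective k₀⁻¹).injOn).subset fun k hk => ?_)
  refine ⟨H.mul_mem (H.inv_mem (hSH hk₀)) (hSH hk), ?_⟩
  rw [sub_mul, one_mul, Units.val_mul, mul_assoc, hγ k hk, ← hγ k₀ hk₀, Units.inv_mul_cancel_left,
    sub_self]

theorem eq_zero_of_mul_eq_zero_of_mul_eq_self (hH : IsOmegaSubgroup H)
    {e c : R} (heF : e ∈ FCSubring R) (hec : e * c = 0) (hce : c * e = c) : c = 0 := by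
  have : (unitCentralizer e).FiniteIndex := heF
  let K := H ⊓ unitCentralizer e
  have : Infinite K := (Subgroup.infinite_inf_of_finiteIndex_s6 hH.1 _).to_subtype
  have hke : ∀ k : K, ((k : Rˣ) : R) * e = e * ((k : Rˣ) : R) := fun k => k.2.2
  have hsq : ∀ k : K, (((k : Rˣ) : R) * c) * (((k : Rˣ) : R) * c) = 0 := fun k => by
    have hckc : c * (((k : Rˣ) : R) * c) = 0 :=
      calc c * (((k : Rˣ) : R) * c) = (c * e) * (((k : Rˣ) : R) * c) := by rw [hce]
        _ = c * (((k : Rˣ) : R) * e) * c := by rw [hke]; simp only [mul_assoc]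
        _ = 0 := by rw [mul_assoc, mul_assoc, hec, mul_zero, mul_zero]
    rw [mul_assoc, hckc, mul_zero]
  let W : K → Rˣ := fun k => (IsNilpotent.isUnit_one_add (r := ((k : Rˣ) : R) * c)
    ⟨2, by rw [sq, hsq]⟩).unit
  have hconj : ∀ k, ↑(W k)⁻¹ * e * W k = e - (k : Rˣ) * c := fun k => by
    have h1 : e * ((k : Rˣ) * c) = 0 := by rw [← mul_assoc, ← hke, mul_assoc, hec, mul_zero]
    rw [mul_assoc, Units.inv_mul_eq_iff_eq_mul]
    simp only [W, IsUnit.unit_spec, mul_add, add_mul, mul_sub, mul_one, one_mul, h1, hsq,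
      mul_assoc, hce]
    abel
  obtain ⟨k₀, hT⟩ := exists_infinite_setOf_commute heF W
  have hc : c * e - e * c = c := by rw [hce, hec, sub_zero]
  have := hH.commutator_eq_zero_of_forall_mul_eq (S := (fun k : K => (k : Rˣ)) '' _)
    (by rintro _ ⟨k, -, rfl⟩; exact k.2.1) (hT.image Subtype.val_injective.injOn) (a := c) (b := e)
    (γ := (k₀ : Rˣ) * c) (by
      rintro _ ⟨k, hk, rfl⟩
      have := Units.inv_mul_mul_eq_of_commute hk
      rw [hconj, hconj, sub_right_inj] at this
      rwa [hc])
  rwa [hc] at this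

theorem mem_center_of_isIdempotentElem (hH : IsOmegaSubgroup H) {e : R}
    (he : IsIdempotentElem e) (heF : e ∈ FCSubring R) : e ∈ Set.center R := by
  refine Semigroup.mem_center_iff.mpr fun r => ?_
  have h1 : (1 - e) * r * e = 0 := hH.eq_zero_of_mul_eq_zero_of_mul_eq_self heF
    (by simp [← mul_assoc, mul_sub, he.eq]) (by simp [mul_assoc, he.eq])
  have h2 : e * r * (1 - e) = 0 := hH.eq_zero_of_mul_eq_zero_of_mul_eq_self (e := 1 - e)
    (by rwa [FCSubring, Set.mem_ofPred_eq, unitCentralizer_one_sub])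
    (by simp [← mul_assoc, sub_mul, he.eq]) (by simp [mul_assoc, sub_mul, mul_sub, he.eq])
  calc r * e = e * r * e + (1 - e) * r * e := by noncomm_ring
    _ = e * r * e + e * r * (1 - e) := by rw [h1, h2]
    _ = e * r := by noncomm_ring

theorem commute_of_isNilpotent_sub_one (hH : IsOmegaSubgroup H) {x y : R}
    (hx : x ∈ FCSubring R) (hy : y ∈ FCSubring R) (hny : IsNilpotent (y - 1)) : Commute x y := by
  have : (unitCentralizer x).FiniteIndex := hx
  have : (unitCentralizer y).FiniteIndex := hy
  let K := H ⊓ (unitCentralizer x ⊓ unitCentralizer y)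
  have : Infinite K := (Subgroup.infinite_inf_of_finiteIndex_s6 hH.1 _).to_subtype
  have hkx : ∀ k : K, Commute ((k : Rˣ) : R) x := fun k => k.2.2.1
  have hky : ∀ k : K, Commute ((k : Rˣ) : R) y := fun k => k.2.2.2
  have hV : ∀ k : K, IsUnit (((k : Rˣ) : R) + (y - 1)) := fun k =>
    hny.isUnit_add_left_of_commute (k : Rˣ).isUnit ((hky k).sub_right (.one_right _)).symm
  let V : K → Rˣ := fun k => (hV k).unit
  set z := x * y - y * x
  have hconj : ∀ k, ↑(V k)⁻¹ * x * V k = x + ↑(V k)⁻¹ * z := fun k => by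
    rw [mul_assoc, Units.inv_mul_eq_iff_eq_mul, mul_add, Units.mul_inv_cancel_left]
    simp only [V, IsUnit.unit_spec, z, mul_add, add_mul, (hkx k).eq]
    noncomm_ring
  obtain ⟨k₀, hT⟩ := exists_infinite_setOf_commute hx V
  set β := ↑(V k₀)⁻¹ * z
  have hβ : β = ↑(V k₀)⁻¹ * x * y - y * (↑(V k₀)⁻¹ * x) := by
    have hVy : Commute y ↑(V k₀)⁻¹ :=
      (((hky k₀).add_left ((Commute.refl y).sub_left (.one_left y))).symm).units_inv_right
    rw [← mul_assoc y, hVy.eq]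
    simp only [β, z, mul_sub, mul_assoc]
  have hβ0 := hH.commutator_eq_zero_of_forall_mul_eq (S := (fun k : K => (k : Rˣ)) '' _)
    (by rintro _ ⟨k, -, rfl⟩; exact k.2.1) (hT.image Subtype.val_injective.injOn)
    (γ := z - (y - 1) * β) (by
      rintro _ ⟨k, hk, rfl⟩
      have := Units.inv_mul_mul_eq_of_commute hk
      rw [hconj, hconj, add_right_inj] at this
      rw [← hβ, eq_sub_iff_add_eq, ← add_mul, show β = ↑(V k)⁻¹ * z from this.symm]
      simpa only [V, IsUnit.unit_spec] using Units.mul_inv_cancel_left (V k) z)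
  rw [← hβ] at hβ0
  have : z = 0 := by simpa [β] using congrArg (((V k₀ : Rˣ) : R) * ·) hβ0
  exact sub_eq_zero.mp this

theorem isNilpotent_commutatorElement_sub_one_of_finite_field (F : Type*) [Field F] [Finite F]
    [Algebra F R] (hH : IsOmegaSubgroup H) {u v : Rˣ} (hu : u ∈ FCRadical R) (hv : v ∈ FCRadical R)
    (hu' : IsOfFinOrder u) (hv' : IsOfFinOrder v) : IsNilpotent (((⁅u, v⁆ : Rˣ) : R) - 1) := by
  let E := Subgroup.normalClosure {u, v}
  have hE : (E : Set Rˣ).Finite := Subgroup.finite_normalClosure (by simp)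
    (by rintro g (rfl | rfl) <;> exact finite_conjugatesOf_of_mem_FCRadical ‹_›)
    (by rintro g (rfl | rfl) <;> assumption)
  let A := Algebra.adjoin F (Units.val '' (E : Set Rˣ))
  have : Finite A := (finite_adjoin_units_of_finite F hE).to_subtype
  have hcent : ∀ e : A, IsIdempotentElem e → e ∈ Set.center A := fun e he => by
    have heF : (e : R) ∈ FCSubring R := mem_FCSubring_iff_finite_conj.mpr <|
      (finite_adjoin_units_of_finite F hE).subset <| Set.range_subset_iff.mpr fun w =>
        conj_mem_adjoin_units F w e.2
    have hc := hH.mem_center_of_isIdempotentElem (congrArg Subtype.val he) heF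
    exact Semigroup.mem_center_iff.mpr fun g => Subtype.ext (Semigroup.mem_center_iff.mp hc g)
  have hmem : ∀ g ∈ E, (g : R) ∈ A := fun g hg => Algebra.subset_adjoin ⟨g, hg, rfl⟩
  let unitA (g : Rˣ) (hg : g ∈ E) : Aˣ :=
    ⟨⟨g, hmem g hg⟩, ⟨↑g⁻¹, hmem _ (E.inv_mem hg)⟩, Subtype.ext g.mul_inv, Subtype.ext g.inv_mul⟩
  have huE : u ∈ E := Subgroup.subset_normalClosure (by simp)
  have hvE : v ∈ E := Subgroup.subset_normalClosure (by simp)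
  have hmap : Units.map (A.val : A →* R) ⁅unitA u huE, unitA v hvE⁆ = ⁅u, v⁆ := by
    rw [map_commutatorElement]
    rfl
  rw [← hmap, Units.coe_map]
  simpa using (isNilpotent_commutatorElement_sub_one_of_finite hcent _ _).map A.val

end IsOmegaSubgroup

/-- If `U(R)` contains an ω-subgroup and `u, v ∈ ΔU` have finite order,
then the commutator `u⁻¹v⁻¹uv` is unipotent and commutes with every element of `ΔU`. -/
theorem torsion_commutator_unipotent_central (F : Type*) [Field F]
    (R : Type*) [Ring R] [Algebra F R]
    (H : Subgroup Rˣ) (hH : IsOmegaSubgroup H)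
    (u v : Rˣ) (hu : u ∈ FCRadical R) (hv : v ∈ FCRadical R)
    (hu' : IsOfFinOrder u) (hv' : IsOfFinOrder v) :
    IsNilpotent (((u⁻¹ * v⁻¹ * u * v : Rˣ) : R) - 1) ∧
    ∀ w ∈ FCRadical R,
      (u⁻¹ * v⁻¹ * u * v) * w = w * (u⁻¹ * v⁻¹ * u * v) := by
  have hc : u⁻¹ * v⁻¹ * u * v = ⁅u⁻¹, v⁻¹⁆ := by simp [commutatorElement_def]
  have hunip : IsNilpotent (((u⁻¹ * v⁻¹ * u * v : Rˣ) : R) - 1) := by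
    rw [hc]
    rcases finite_or_infinite F with hF | hF
    · exact hH.isNilpotent_commutatorElement_sub_one_of_finite_field F (inv_mem hu) (inv_mem hv)
        hu'.inv hv'.inv
    · have hcomm := commute_of_mem_FCSubring_of_finite_spectrum (inv_mem hu)
        ((Units.isOfFinOrder_val.mpr hv'.inv).finite_spectrum F)
      rw [commutatorElement_eq_one_iff_commute.mpr (Commute.units_val_iff.mp hcomm),
        Units.val_one, sub_self]
      exact .zero
  have hcF : u⁻¹ * v⁻¹ * u * v ∈ FCRadical R :=
    mul_mem (mul_mem (mul_mem (inv_mem hu) (inv_mem hv)) hu) hv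
  exact ⟨hunip, fun w hw => Commute.units_val_iff.mp
    (hH.commute_of_isNilpotent_sub_one hw hcF hunip).symm⟩
end

section
/- Let R be an algebra over a field F, let g ∈ U(R), let a ∈ R, and let α, β ∈ F with α ≠ β be such that g - α·1 and g - β·1 are units of R. If ag ≠ ga, then (g - α·1)⁻¹ a (g - α·1) ≠ (g - β·1)⁻¹ a (g - β·1). -/
/-- If `g - α·1` and `g - β·1` are units with `α ≠ β` and `a` does not
commute with `g`, then the two conjugates of `a` are distinct. -/
theorem distinct_conjugates_of_distinct_scalars (F : Type*) [Field F]
    (R : Type*) [Ring R] [Algebra F R]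
    (g : Rˣ) (a : R) (α β : F) (hαβ : α ≠ β)
    (hα : IsUnit ((g : R) - algebraMap F R α))
    (hβ : IsUnit ((g : R) - algebraMap F R β))
    (hag : a * (g : R) ≠ (g : R) * a) :
    Ring.inverse ((g : R) - algebraMap F R α) * a * ((g : R) - algebraMap F R α) ≠
      Ring.inverse ((g : R) - algebraMap F R β) * a * ((g : R) - algebraMap F R β) := by
  intro h
  apply hag
  set A := (g : R) - algebraMap F R α with hAdef
  set B := (g : R) - algebraMap F R β with hBdef
  set x := Ring.inverse B * a * B with hxdef
  have hA : a * A = A * x := by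
    rw [← h, ← mul_assoc, ← mul_assoc, Ring.mul_inverse_cancel _ hα, one_mul]
  have hB : a * B = B * x := by
    rw [hxdef, ← mul_assoc, ← mul_assoc, Ring.mul_inverse_cancel _ hβ, one_mul]
  have hsub : a * algebraMap F R (α - β) = algebraMap F R (α - β) * x := by
    have hBA : B - A = algebraMap F R (α - β) := by
      rw [hAdef, hBdef, map_sub]; abel
    calc a * algebraMap F R (α - β) = a * B - a * A := by rw [← mul_sub, hBA]
      _ = B * x - A * x := by rw [hA, hB]
      _ = algebraMap F R (α - β) * x := by rw [← sub_mul, hBA]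
  have hax : a = x := by
    have h1 : algebraMap F R (α - β) * a = algebraMap F R (α - β) * x := by
      rw [Algebra.commutes, hsub]
    have h2 : algebraMap F R (α - β)⁻¹ * (algebraMap F R (α - β) * a)
        = algebraMap F R (α - β)⁻¹ * (algebraMap F R (α - β) * x) := by rw [h1]
    rwa [← mul_assoc, ← mul_assoc, ← map_mul, inv_mul_cancel₀ (sub_ne_zero.mpr hαβ),
      map_one, one_mul, one_mul] at h2
  have := hB
  rw [← hax, hBdef, mul_sub, sub_mul, Algebra.commutes] at this
  exact sub_left_injective this
end

section
/- Let R be an algebra over an infinite field F. Then every unit g ∈ U(R) that is algebraic over F commutes with every element of the FC-subring ∇(R) = {a ∈ R : [U(R) : C_{U(R)}(a)] < ∞}. -/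
/-!
If `g` is algebraic over `F`, its spectrum is contained in the finite root set of an annihilating
polynomial, so `k - g` is a unit for infinitely many `k ∈ F`. If `a ∈ ∇(R)`, two of these units,
`u = k - g` and `v = l - g` with `k ≠ l`, lie in the same coset of `C(a)`. Then
`u⁻¹ v = 1 + (l - k) u⁻¹` commutes with `a`, hence so do `u⁻¹`, `u` and finally `g = k - u`.
-/

open Polynomial

theorem spectrum_subset_setOf_isRoot {𝕜 A : Type*} [Field 𝕜] [Ring A] [Algebra 𝕜 A]
    {a : A} {p : 𝕜[X]} (hp : aeval a p = 0) : spectrum 𝕜 a ⊆ {k | p.IsRoot k} := by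
  intro k hk
  have h₀ : eval k p ∈ spectrum 𝕜 (0 : A) :=
    hp ▸ spectrum.subset_polynomial_aeval a p ⟨k, hk, rfl⟩
  by_contra hk'
  exact spectrum.mem_iff.mp h₀ (by simpa using (Ne.isUnit hk').map (algebraMap 𝕜 A))

theorem IsAlgebraic.finite_spectrum {𝕜 A : Type*} [Field 𝕜] [Ring A] [Algebra 𝕜 A]
    {a : A} (ha : IsAlgebraic 𝕜 a) : (spectrum 𝕜 a).Finite :=
  let ⟨_, hp0, hp⟩ := ha
  (finite_setOfPred_isRoot hp0).subset (spectrum_subset_setOf_isRoot hp)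

theorem IsAlgebraic.infinite_resolventSet {𝕜 A : Type*} [Field 𝕜] [Infinite 𝕜] [Ring A]
    [Algebra 𝕜 A] {a : A} (ha : IsAlgebraic 𝕜 a) : (resolventSet 𝕜 a).Infinite := by
  simpa only [spectrum, compl_compl] using ha.finite_spectrum.infinite_compl

theorem Subgroup.exists_ne_inv_mul_mem_of_infinite {G ι : Type*} [Group G] [Infinite ι]
    (H : Subgroup G) [H.FiniteIndex] (f : ι → G) : ∃ i j, i ≠ j ∧ (f i)⁻¹ * f j ∈ H := by
  have : Finite (G ⧸ H) := Subgroup.finite_quotient_of_finiteIndex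
  obtain ⟨i, j, hij, hf⟩ := Finite.exists_ne_map_eq_of_infinite (fun i ↦ (f i : G ⧸ H))
  exact ⟨i, j, hij, QuotientGroup.eq.mp hf⟩

theorem commute_of_commute_units_inv_mul {F R : Type*} [Field F] [Ring R] [Algebra F R]
    {a b : R} {k l : F} (hkl : k ≠ l) {u v : Rˣ} (hu : (u : R) = algebraMap F R k - b)
    (hv : (v : R) = algebraMap F R l - b) (h : Commute ((u⁻¹ * v : Rˣ) : R) a) :
    Commute b a := by
  have hv' : (v : R) = u + algebraMap F R (l - k) := by
    rw [hv, hu, map_sub]; abel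
  have h_inv_mul : ((u⁻¹ * v : Rˣ) : R) = 1 + (l - k) • (u⁻¹ : Rˣ) := by
    rw [Units.val_mul, hv', mul_add, Units.inv_mul, Algebra.smul_def, Algebra.commutes]
  have h_smul : Commute ((l - k) • ((u⁻¹ : Rˣ) : R)) a := by
    simpa only [h_inv_mul, add_sub_cancel_left] using h.sub_left (Commute.one_left a)
  have h_inv : Commute ((u⁻¹ : Rˣ) : R) a := by
    simpa only [inv_smul_smul₀ (sub_ne_zero.mpr hkl.symm)] using h_smul.smul_left (l - k)⁻¹
  have h_u : Commute (u : R) a := by simpa only [inv_inv] using h_inv.units_inv_left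
  simpa only [hu, sub_sub_cancel] using (Algebra.commute_algebraMap_left k a).sub_left h_u

/-- Over an infinite field, every algebraic unit commutes with every
element of the FC-subring `∇(R)`. -/
theorem algebraic_unit_centralizes_fcSubring (F : Type*) [Field F] [Infinite F]
    (R : Type*) [Ring R] [Algebra F R]
    (g : Rˣ) (hg : IsAlgebraic F (g : R)) :
    ∀ a ∈ FCSubring R, (g : R) * a = a * (g : R) := by
  intro a ha
  have : (unitCentralizer a).FiniteIndex := ha
  have : Infinite (resolventSet F (g : R)) := hg.infinite_resolventSet.to_subtype
  obtain ⟨k, l, hkl, hmem⟩ := (unitCentralizer a).exists_ne_inv_mul_mem_of_infinite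
    fun k : resolventSet F (g : R) ↦ k.2.unit
  exact commute_of_commute_units_inv_mul (Subtype.coe_injective.ne hkl) k.2.unit_spec
    l.2.unit_spec hmem
end

section
/- Let R be an algebra over an infinite field F. Then the FC-radical ΔU = {u ∈ U(R) : [U(R) : C_{U(R)}(u)] < ∞} is a nilpotent group of nilpotency class at most 2; that is, every commutator of two elements of ΔU is central in ΔU. -/
/-! The commutator `c` of two FC-units `u, v` has finite order (Schur): inside `⟨u, v⟩` the centre
contains `C(u) ∩ C(v) ∩ ⟨u, v⟩` and so has finite index `n`, and the transfer to the centre,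
`g ↦ g ^ n`, kills commutators. Hence the spectrum of `c` lies among the roots of unity, and over an
infinite field infinitely many `k - c` are units. Two of them, `k - c` and `l - c`, lie in the same
coset of the centralizer of an FC-unit `w`; their quotient `1 + (l - k)(k - c)⁻¹` commutes with `w`,
hence so do `k - c` and `c`. -/

open scoped commutatorElement

section Schur

open Subgroup

lemma commutatorElement_pow_index_center {G : Type*} [Group G] [(center G).FiniteIndex]
    (g h : G) : ⁅g, h⁆ ^ (center G).index = 1 := by
  have h1 : MonoidHom.transferCenterPow G ⁅g, h⁆ = 1 := by
    rw [map_commutatorElement, commutatorElement_eq_one_iff_commute]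
    exact Subtype.ext (mem_center_iff.mp (MonoidHom.transferCenterPow G h).2 _)
  simpa only [MonoidHom.transferCenterPow_apply, OneMemClass.coe_one] using congrArg Subtype.val h1

lemma isOfFinOrder_commutatorElement {G : Type*} [Group G] {g h : G}
    (hg : (centralizer {g}).FiniteIndex) (hh : (centralizer {h}).FiniteIndex) :
    IsOfFinOrder ⁅g, h⁆ := by
  set H := closure ({g, h} : Set G)
  have hcenter : (centralizer {g} ⊓ centralizer {h}).subgroupOf H ≤ center H := by
    intro x hx
    have hx' : (x : G) ∈ centralizer (H : Set G) := by
      rw [centralizer_closure, mem_centralizer_iff]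
      rintro y (rfl | rfl)
      exacts [(mem_centralizer_singleton_iff.mp hx.1).symm,
        (mem_centralizer_singleton_iff.mp hx.2).symm]
    exact mem_center_iff.mpr fun y => Subtype.ext (mem_centralizer_iff.mp hx' y y.2)
  have : (center H).FiniteIndex := finiteIndex_of_le hcenter
  have hpow := commutatorElement_pow_index_center (⟨g, subset_closure (by simp)⟩ : H)
    ⟨h, subset_closure (by simp)⟩
  exact isOfFinOrder_iff_pow_eq_one.mpr
    ⟨_, Nat.pos_of_ne_zero FiniteIndex.index_ne_zero, congrArg Subtype.val hpow⟩

end Schur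

lemma mem_FCRadical_iff_finiteIndex_centralizer {R : Type*} [Ring R] {u : Rˣ} :
    u ∈ FCRadical R ↔ (Subgroup.centralizer {u}).FiniteIndex := by
  have : unitCentralizer (u : R) = Subgroup.centralizer {u} := by
    ext w
    rw [mem_unitCentralizer, Subgroup.mem_centralizer_singleton_iff, Units.ext_iff,
      Units.val_mul, Units.val_mul]
  rw [mem_FCRadical, this]

open Polynomial in
lemma spectrum_finite_of_pow_eq_one {𝕜 A : Type*} [Field 𝕜] [Ring A] [Algebra 𝕜 A] {a : A}
    {n : ℕ} (hn : n ≠ 0) (ha : a ^ n = 1) : (spectrum 𝕜 a).Finite := by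
  classical
  rcases subsingleton_or_nontrivial A with _ | _
  · simp [spectrum.of_subsingleton]
  refine (nthRoots n (1 : 𝕜)).toFinset.finite_toSet.subset fun k hk => ?_
  have hkn := spectrum.pow_mem_pow a n hk
  rw [ha, spectrum.one_eq, Set.mem_singleton_iff] at hkn
  simpa [mem_nthRoots (Nat.pos_of_ne_zero hn)] using hkn

section Resolvent

variable {F R : Type*} [Field F] [Ring R] [Algebra F R]

lemma commute_of_commute_inv_mul_add_algebraMap {x : Rˣ} {w : R} {d : F} (hd : d ≠ 0)
    (h : Commute (↑x⁻¹ * (x + algebraMap F R d)) w) : Commute (x : R) w := by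
  have hexpand : (↑x⁻¹ * (x + algebraMap F R d) : R) = 1 + d • (↑x⁻¹ : R) := by
    rw [mul_add, Units.inv_mul, Algebra.smul_def, Algebra.commutes]
  have hd_inv : Commute (d • (↑x⁻¹ : R)) w := by
    have := (hexpand ▸ h).sub_left (Commute.one_left w)
    rwa [add_sub_cancel_left] at this
  have hinv : Commute (↑x⁻¹ : R) w := by
    simpa only [smul_smul, inv_mul_cancel₀ hd, one_smul] using hd_inv.smul_left d⁻¹
  exact Commute.units_inv_left_iff.mp hinv

lemma commute_of_infinite_resolventSet {a w : R} (ha : (resolventSet F a).Infinite)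
    (hw : w ∈ FCSubring R) : Commute a w := by
  have : (unitCentralizer w).FiniteIndex := hw
  have : Infinite (resolventSet F a) := ha.to_subtype
  let x : resolventSet F a → Rˣ := fun k => (spectrum.mem_resolventSet_iff.mp k.2).unit
  obtain ⟨k, l, hkl, hcoset⟩ :=
    Finite.exists_ne_map_eq_of_infinite fun k => (x k : Rˣ ⧸ unitCentralizer w)
  have hmem : (x k)⁻¹ * x l ∈ unitCentralizer w := QuotientGroup.eq.mp hcoset
  have hxl : (x l : R) = x k + algebraMap F R (l - k) := by
    simp only [x, IsUnit.unit_spec, map_sub]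
    abel
  have hxk : Commute (x k : R) w := by
    refine commute_of_commute_inv_mul_add_algebraMap (d := (l : F) - k) (sub_ne_zero.mpr ?_) ?_
    · exact fun h => hkl (Subtype.ext h).symm
    · rw [← hxl, ← Units.val_mul]
      exact mem_unitCentralizer.mp hmem
  have hak : a = algebraMap F R k - x k := by simp only [x, IsUnit.unit_spec, sub_sub_cancel]
  rw [hak]
  exact (Algebra.commute_algebraMap_left (k : F) w).sub_left hxk

end Resolvent

/-- Over an infinite field, `ΔU` is nilpotent of class at most 2: every
commutator of two elements of `ΔU` is central in `ΔU`. -/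
theorem fcRadical_nilpotent_class_two (F : Type*) [Field F] [Infinite F]
    (R : Type*) [Ring R] [Algebra F R] :
    ∀ u ∈ FCRadical R, ∀ v ∈ FCRadical R, ∀ w ∈ FCRadical R,
      (u⁻¹ * v⁻¹ * u * v) * w = w * (u⁻¹ * v⁻¹ * u * v) := by
  intro u hu v hv w hw
  have hfin : IsOfFinOrder (u⁻¹ * v⁻¹ * u * v) := by
    simpa only [commutatorElement_def, inv_inv] using isOfFinOrder_commutatorElement
      (mem_FCRadical_iff_finiteIndex_centralizer.mp (inv_mem hu))
      (mem_FCRadical_iff_finiteIndex_centralizer.mp (inv_mem hv))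
  obtain ⟨n, hn, hpow⟩ := hfin.exists_pow_eq_one
  have hspec : (spectrum F ((u⁻¹ * v⁻¹ * u * v : Rˣ) : R)).Finite :=
    spectrum_finite_of_pow_eq_one hn.ne' (by rw [← Units.val_pow_eq_pow_val, hpow, Units.val_one])
  have hres := hspec.infinite_compl
  rw [spectrum, compl_compl] at hres
  exact Units.ext (commute_of_infinite_resolventSet hres hw).eq
end

section
/- Let R be an algebra over an infinite field F such that every unit of R is algebraic over F. Then the FC-radical ΔU = {u ∈ U(R) : [U(R) : C_{U(R)}(u)] < ∞} is contained in the center of the group U(R). -/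
/-!
If `u` has finitely many conjugates and the unit `v` is annihilated by `p ≠ 0`, then `v - c` is a
unit for each of the infinitely many `c ∈ F` that are not roots of `p`. By pigeonhole two distinct
`c₁, c₂` give the same conjugate `x = (v - cᵢ) u (v - cᵢ)⁻¹`; subtracting the identities
`x (v - cᵢ) = (v - cᵢ) u` gives `(c₂ - c₁) x = (c₂ - c₁) u`, so `x = u`, and `u` commutes with
`v - c₁`, hence with `v`.
-/

open Polynomial

theorem Subgroup.finite_range_conj_of_finiteIndex_centralizer {G : Type*} [Group G] (g : G)
    [(Subgroup.centralizer {g}).FiniteIndex] : (Set.range fun h : G => h * g * h⁻¹).Finite := by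
  have hindex : (MulAction.stabilizer (ConjAct G) g).index ≠ 0 := by
    rw [ConjAct.stabilizer_eq_centralizer]
    exact Subgroup.FiniteIndex.index_ne_zero (H := Subgroup.centralizer {g})
  rw [MulAction.index_stabilizer] at hindex
  convert Set.finite_of_ncard_ne_zero hindex using 1
  ext x
  simp only [Set.mem_range, MulAction.mem_orbit_iff, ConjAct.smul_def]
  exact ConjAct.ofConjAct.surjective.exists

theorem unitCentralizer_val_eq_centralizer {R : Type*} [Ring R] (u : Rˣ) :
    unitCentralizer (u : R) = Subgroup.centralizer {u} := by
  ext w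
  simp [Subgroup.mem_centralizer_singleton_iff, Units.ext_iff]

section Algebra

variable {F R : Type*} [Field F] [Ring R] [Algebra F R]

theorem isUnit_sub_algebraMap_of_aeval_eq_zero {a : R} {p : F[X]} (hp : aeval a p = 0) {c : F}
    (hc : ¬p.IsRoot c) : IsUnit (a - algebraMap F R c) := by
  by_contra h
  have hspec : c ∈ spectrum F a := by
    rw [spectrum.mem_iff, ← neg_sub, IsUnit.neg_iff]; exact h
  have hmapped := spectrum.subset_polynomial_aeval a p ⟨c, hspec, rfl⟩
  rw [hp, spectrum.mem_iff, sub_zero] at hmapped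
  exact hmapped ((Ne.isUnit hc).map (algebraMap F R))

theorem commute_of_intertwines_sub_algebraMap {a x u : R} {c₁ c₂ : F} (hc : c₁ ≠ c₂)
    (h₁ : x * (a - algebraMap F R c₁) = (a - algebraMap F R c₁) * u)
    (h₂ : x * (a - algebraMap F R c₂) = (a - algebraMap F R c₂) * u) :
    Commute a u := by
  have hd : IsUnit (algebraMap F R (c₂ - c₁)) := (sub_ne_zero.mpr hc.symm).isUnit.map _
  have hxu : x = u := by
    refine hd.mul_right_cancel ?_
    rw [← Algebra.commutes _ u, map_sub]
    calc x * (algebraMap F R c₂ - algebraMap F R c₁)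
        = x * (a - algebraMap F R c₁) - x * (a - algebraMap F R c₂) := by noncomm_ring
      _ = (a - algebraMap F R c₁) * u - (a - algebraMap F R c₂) * u := by rw [h₁, h₂]
      _ = (algebraMap F R c₂ - algebraMap F R c₁) * u := by noncomm_ring
  subst hxu
  have hcomm : Commute (a - algebraMap F R c₁) x := h₁.symm
  simpa using hcomm.add_left (Algebra.commutes c₁ x)

theorem commute_of_finite_conj_of_infinite_isUnit_sub {u : Rˣ}
    (hu : (Set.range fun w : Rˣ => w * u * w⁻¹).Finite) {a : R} {S : Set F} (hS : S.Infinite)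
    (ha : ∀ c ∈ S, IsUnit (a - algebraMap F R c)) : Commute a u := by
  let conj : F → R := fun c =>
    (a - algebraMap F R c) * u * Ring.inverse (a - algebraMap F R c)
  have hmaps : Set.MapsTo conj S (Units.val '' Set.range fun w : Rˣ => w * u * w⁻¹) := by
    intro c hc
    obtain ⟨w, hw⟩ := ha c hc
    exact ⟨w * u * w⁻¹, ⟨w, rfl⟩, by simp [conj, ← hw]⟩
  obtain ⟨c₁, hc₁, c₂, hc₂, hne, heq⟩ := hS.exists_ne_map_eq_of_mapsTo hmaps (hu.image _)
  have hintertwines : ∀ c ∈ S,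
      conj c * (a - algebraMap F R c) = (a - algebraMap F R c) * u := fun c hc => by
    rw [mul_assoc _ (Ring.inverse _), Ring.inverse_mul_cancel _ (ha c hc), mul_one]
  exact commute_of_intertwines_sub_algebraMap hne (hintertwines c₁ hc₁)
    (heq ▸ hintertwines c₂ hc₂)

end Algebra

/-- Over an infinite field, if every unit of `R` is algebraic over `F`,
then `ΔU` is contained in the center of `U(R)`. -/
theorem fcRadical_central_of_all_units_algebraic (F : Type*) [Field F] [Infinite F]
    (R : Type*) [Ring R] [Algebra F R]
    (halg : ∀ u : Rˣ, IsAlgebraic F (u : R)) :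
    FCRadical R ≤ Subgroup.center Rˣ := by
  intro u hu
  rw [mem_FCRadical, unitCentralizer_val_eq_centralizer] at hu
  refine Subgroup.mem_center_iff.mpr fun v => Units.ext ?_
  obtain ⟨p, hp, hpv⟩ := halg v
  exact (commute_of_finite_conj_of_infinite_isUnit_sub
    (Subgroup.finite_range_conj_of_finiteIndex_centralizer u)
    (p.finite_setOfPred_isRoot hp).infinite_compl
    (fun c hc => isUnit_sub_algebraMap_of_aeval_eq_zero hpv hc)).eq
end
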